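/- Let P ∈ ℝ^{n×n} be symmetric positive definite and β > 0, and let 𝒜 be a set of matrices in ℝ^{n×n} such that A P Aᵀ ⪯ P − βI for every A ∈ 𝒜. Set c := √(1 − β/λmax(P)), where λmax(P) is the largest eigenvalue of P, so 0 ≤ c < 1. Let D ⊆ ℝⁿ and d̄ ≥ 0 satisfy dᵀ P⁻¹ d ≤ d̄² for all d ∈ D, and let r ≥ d̄/(1 − c). Then the ellipsoid E(r) := { e ∈ ℝⁿ : eᵀ P⁻¹ e ≤ r² } is robust positively invariant: for every A ∈ 𝒜, every e ∈ E(r), and every d ∈ D, the successor A e + d belongs to E(r). -/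

import Mathlib

/-!
Write `‖x‖ := √(xᵀ P⁻¹ x)`. Since `P ⪯ λmax(P) I`, the hypothesis gives
`A P Aᵀ ⪯ P - βI ⪯ (1 - β/λmax) P ⪯ c² P`, and Cauchy–Schwarz in the `P`-inner product dualises
this to `‖A e‖ ≤ c ‖e‖`. The triangle inequality then gives `‖A e + d‖ ≤ c r + d̄ ≤ r`.
-/

open Matrix
open scoped MatrixOrder

namespace Matrix

variable {ι : Type*} [Fintype ι]

namespace PosSemidef

variable {M : Matrix ι ι ℝ}

theorem inner_toInnerProductSpace (hM : M.PosSemidef) (x y : ι → ℝ) :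
    @inner ℝ _ (M.toInnerProductSpace hM).toInner x y = x ⬝ᵥ M *ᵥ y := by
  change (M *ᵥ y) ⬝ᵥ star x = _
  rw [star_trivial, dotProduct_comm]

theorem norm_toSeminormedAddCommGroup (hM : M.PosSemidef) (x : ι → ℝ) :
    @norm _ (M.toSeminormedAddCommGroup hM).toNorm x = √(x ⬝ᵥ M *ᵥ x) := by
  let _ := M.toSeminormedAddCommGroup hM
  let _ := M.toInnerProductSpace hM
  rw [norm_eq_sqrt_real_inner, inner_toInnerProductSpace]

theorem sqrt_dotProduct_mulVec_add_le (hM : M.PosSemidef) (x y : ι → ℝ) :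
    √((x + y) ⬝ᵥ M *ᵥ (x + y)) ≤ √(x ⬝ᵥ M *ᵥ x) + √(y ⬝ᵥ M *ᵥ y) := by
  simpa only [norm_toSeminormedAddCommGroup] using
    @norm_add_le _ (M.toSeminormedAddCommGroup hM).toSeminormedAddGroup x y

theorem dotProduct_mulVec_sq_le (hM : M.PosSemidef) (x y : ι → ℝ) :
    (x ⬝ᵥ M *ᵥ y) ^ 2 ≤ (x ⬝ᵥ M *ᵥ x) * (y ⬝ᵥ M *ᵥ y) := by
  let _ := M.toSeminormedAddCommGroup hM
  let _ := M.toInnerProductSpace hM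
  simpa only [sq, inner_toInnerProductSpace] using real_inner_mul_inner_self_le x y

end PosSemidef

theorem dotProduct_mulVec_le_of_le {M N : Matrix ι ι ℝ} (h : M ≤ N) (x : ι → ℝ) :
    x ⬝ᵥ M *ᵥ x ≤ x ⬝ᵥ N *ᵥ x := by
  have := (le_iff.mp h).dotProduct_mulVec_nonneg x
  rw [star_trivial, sub_mulVec, dotProduct_sub] at this
  linarith

theorem IsHermitian.le_iSup_eigenvalues_smul_one [DecidableEq ι] {P : Matrix ι ι ℝ}
    (hP : P.IsHermitian) : P ≤ (⨆ i, hP.eigenvalues i) • 1 := by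
  rw [← Algebra.algebraMap_eq_smul_one]
  refine le_algebraMap_of_spectrum_le ?_ hP.isSelfAdjoint
  rw [hP.spectrum_real_eq_range_eigenvalues]
  rintro _ ⟨i, rfl⟩
  exact le_ciSup (Set.finite_range _).bddAbove i

theorem PosDef.iSup_eigenvalues_pos [DecidableEq ι] [Nonempty ι] {P : Matrix ι ι ℝ}
    (hP : P.PosDef) : 0 < ⨆ i, hP.isHermitian.eigenvalues i :=
  (hP.eigenvalues_pos (Classical.arbitrary ι)).trans_le
    (le_ciSup (Set.finite_range _).bddAbove _)

theorem mul_mul_transpose_le_one_sub_div_smul {P A : Matrix ι ι ℝ} [DecidableEq ι] {lam β : ℝ}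
    (hlam : 0 < lam) (hβ : 0 ≤ β) (hP : P ≤ lam • 1) (hA : A * P * Aᵀ ≤ P - β • 1) :
    A * P * Aᵀ ≤ (1 - β / lam) • P := by
  have hβ1 : β • (1 : Matrix ι ι ℝ) = (β / lam) • lam • 1 := by
    rw [smul_smul, div_mul_cancel₀ _ hlam.ne']
  calc A * P * Aᵀ ≤ P - β • 1 := hA
    _ ≤ P - (β / lam) • P := by
      rw [hβ1]
      exact sub_le_sub_left (smul_le_smul_of_nonneg_left hP (div_nonneg hβ hlam.le)) _
    _ = (1 - β / lam) • P := by rw [sub_smul, one_smul]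

theorem transpose_mulVec_dotProduct_mulVec (A M : Matrix ι ι ℝ) (y : ι → ℝ) :
    Aᵀ *ᵥ y ⬝ᵥ M *ᵥ (Aᵀ *ᵥ y) = y ⬝ᵥ (A * M * Aᵀ) *ᵥ y := by
  rw [← mulVec_mulVec, ← mulVec_mulVec, dotProduct_mulVec y, ← mulVec_transpose]

theorem PosDef.dotProduct_inv_mulVec_mulVec_le [DecidableEq ι] {P A : Matrix ι ι ℝ}
    (hP : P.PosDef) {κ : ℝ} (hκ : 0 ≤ κ) (h : A * P * Aᵀ ≤ κ • P) (e : ι → ℝ) :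
    (A *ᵥ e) ⬝ᵥ P⁻¹ *ᵥ (A *ᵥ e) ≤ κ * (e ⬝ᵥ P⁻¹ *ᵥ e) := by
  have hPinv (v : ι → ℝ) : P *ᵥ P⁻¹ *ᵥ v = v := by
    rw [mulVec_mulVec, mul_nonsing_inv _ (P.isUnit_iff_isUnit_det.mp hP.isUnit), one_mulVec]
  set y := P⁻¹ *ᵥ (A *ᵥ e)
  set L := (A *ᵥ e) ⬝ᵥ y
  set q := e ⬝ᵥ P⁻¹ *ᵥ e
  have hL : 0 ≤ L := by
    simpa only [star_trivial] using hP.inv.posSemidef.dotProduct_mulVec_nonneg (A *ᵥ e)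
  have hq : 0 ≤ q := by
    simpa only [star_trivial] using hP.inv.posSemidef.dotProduct_mulVec_nonneg e
  have hyPy : y ⬝ᵥ P *ᵥ y = L := by rw [hPinv, dotProduct_comm]
  have hcross : Aᵀ *ᵥ y ⬝ᵥ P *ᵥ (P⁻¹ *ᵥ e) = L := by
    rw [hPinv, mulVec_transpose, ← dotProduct_mulVec, dotProduct_comm]
  -- Cauchy–Schwarz for `⟪Aᵀ y, P⁻¹ e⟫_P`, which equals `L`
  have hcs := hP.posSemidef.dotProduct_mulVec_sq_le (Aᵀ *ᵥ y) (P⁻¹ *ᵥ e)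
  rw [hcross, transpose_mulVec_dotProduct_mulVec, hPinv, dotProduct_comm (P⁻¹ *ᵥ e)] at hcs
  have hcontr : y ⬝ᵥ (A * P * Aᵀ) *ᵥ y ≤ κ * L := by
    simpa only [smul_mulVec, dotProduct_smul, smul_eq_mul, hyPy] using
      dotProduct_mulVec_le_of_le h y
  have : L ^ 2 ≤ κ * L * q := hcs.trans (mul_le_mul_of_nonneg_right hcontr hq)
  nlinarith [mul_nonneg hκ hq]

end Matrix

/-- If every `A ∈ 𝒜` satisfies `A P Aᵀ ⪯ P - βI` with `P ≻ 0`, `β > 0`, and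
`c := √(1 - β/λmax(P))`, `D` has `P⁻¹`-norm bound `d̄`, and `r ≥ d̄/(1 - c)`, then the
ellipsoid `{e : eᵀ P⁻¹ e ≤ r²}` is robust positively invariant for `e⁺ = A e + d`. -/
theorem stmt12 {n : ℕ} (hn : 0 < n) (P : Matrix (Fin n) (Fin n) ℝ) (hP : P.PosDef)
    (β : ℝ) (hβ : 0 < β)
    (𝒜 : Set (Matrix (Fin n) (Fin n) ℝ))
    (hA : ∀ A ∈ 𝒜, (P - β • (1 : Matrix (Fin n) (Fin n) ℝ) - A * P * Aᵀ).PosSemidef)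
    (c : ℝ) (hc : c = Real.sqrt (1 - β / (⨆ i, hP.isHermitian.eigenvalues i)))
    (D : Set (Fin n → ℝ)) (dbar : ℝ) (hdbar : 0 ≤ dbar)
    (hD : ∀ d ∈ D, d ⬝ᵥ P⁻¹.mulVec d ≤ dbar ^ 2)
    (r : ℝ) (hr : dbar / (1 - c) ≤ r) :
    (0 ≤ c ∧ c < 1) ∧
      ∀ A ∈ 𝒜, ∀ e : Fin n → ℝ, e ⬝ᵥ P⁻¹.mulVec e ≤ r ^ 2 →
        ∀ d ∈ D, (A.mulVec e + d) ⬝ᵥ P⁻¹.mulVec (A.mulVec e + d) ≤ r ^ 2 := by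
  have : Nonempty (Fin n) := Fin.pos_iff_nonempty.mp hn
  set lam := ⨆ i, hP.isHermitian.eigenvalues i
  have hlam : 0 < lam := hP.iSup_eigenvalues_pos
  have hc0 : 0 ≤ c := hc ▸ Real.sqrt_nonneg _
  have hc1 : c < 1 := by
    rw [hc, Real.sqrt_lt' one_pos]
    linarith [div_pos hβ hlam]
  have hr0 : 0 ≤ r := (div_nonneg hdbar (by linarith)).trans hr
  have hcr : dbar + c * r ≤ r := by
    rw [div_le_iff₀ (by linarith)] at hr
    linarith
  refine ⟨⟨hc0, hc1⟩, fun A hAm e he d hd => ?_⟩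
  have hcontr : A * P * Aᵀ ≤ c ^ 2 • P := calc
    A * P * Aᵀ ≤ (1 - β / lam) • P :=
      mul_mul_transpose_le_one_sub_div_smul hlam hβ.le
        hP.isHermitian.le_iSup_eigenvalues_smul_one (le_iff.mpr (hA A hAm))
    _ ≤ c ^ 2 • P := by
      refine smul_le_smul_of_nonneg_right ?_ hP.posSemidef.nonneg
      -- `√` truncates at `0`, so `c ^ 2 = max (1 - β / lam) 0`
      rw [hc, Real.sq_sqrt']
      exact le_max_left _ _
  have hAe : √((A *ᵥ e) ⬝ᵥ P⁻¹ *ᵥ (A *ᵥ e)) ≤ c * r := by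
    rw [Real.sqrt_le_left (mul_nonneg hc0 hr0)]
    calc (A *ᵥ e) ⬝ᵥ P⁻¹ *ᵥ (A *ᵥ e) ≤ c ^ 2 * (e ⬝ᵥ P⁻¹ *ᵥ e) :=
          hP.dotProduct_inv_mulVec_mulVec_le (sq_nonneg c) hcontr e
      _ ≤ c ^ 2 * r ^ 2 := by gcongr
      _ = (c * r) ^ 2 := by ring
  rw [← Real.sqrt_le_left hr0]
  calc √((A *ᵥ e + d) ⬝ᵥ P⁻¹ *ᵥ (A *ᵥ e + d))
      ≤ √((A *ᵥ e) ⬝ᵥ P⁻¹ *ᵥ (A *ᵥ e)) + √(d ⬝ᵥ P⁻¹ *ᵥ d) :=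
        hP.inv.posSemidef.sqrt_dotProduct_mulVec_add_le _ _
    _ ≤ c * r + dbar := add_le_add hAe ((Real.sqrt_le_left hdbar).mpr (hD d hd))
    _ ≤ r := by linarith
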